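/- Let v be an irreducible Llull matrix on a finite set S. Then there is a unique φ in the open simplex Φ = {φ_x > 0, Σφ_x = 1} maximizing F(φ) = ∏_{{x,y}} φ_x^{v_{xy}} φ_y^{v_{yx}}/(φ_x+φ_y)^{t_{xy}}, and it is the unique solution in Φ of the system Σ_{y≠x} t_{xy} φ_x/(φ_x+φ_y) = Σ_{y≠x} v_{xy} for all x. -/

import Mathlib

/-- The minimum score along a path `x, z₁, …, zₖ, y` (the list gives the
intermediate points; the empty list is the direct link from `x` to `y`). -/
def chainMin {S : Type*} (v : S → S → ℝ) : S → List S → S → ℝ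
  | x, [], y => v x y
  | x, z :: l, y => min (v x z) (chainMin v z l y)

/-- Indirect (max-min) score: supremum over all paths from `x` to `y`
of the minimum direct score along the path. -/
noncomputable def iScore {S : Type*} (v : S → S → ℝ) (x y : S) : ℝ :=
  sSup {r : ℝ | ∃ l : List S, r = chainMin v x l y}

/-- A Llull matrix: preference scores in `[0,1]` with `v x y + v y x ≤ 1`. -/
def IsLlull {S : Type*} (v : S → S → ℝ) : Prop :=
  ∀ x y : S, x ≠ y → 0 ≤ v x y ∧ v x y ≤ 1 ∧ v x y + v y x ≤ 1


open Finset in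
/-- Zermelo's likelihood function
`F(φ) = ∏_{{x,y}} φ_x^{v_{xy}} φ_y^{v_{yx}} / (φ_x+φ_y)^{t_{xy}}`,
written as a product over ordered pairs of distinct elements. -/
noncomputable def Zf {S : Type*} [Fintype S] [DecidableEq S]
    (v : S → S → ℝ) (φ : S → ℝ) : ℝ :=
  ∏ x, ∏ y ∈ Finset.univ.erase x, (φ x) ^ (v x y) / (φ x + φ y) ^ (v x y)

/-- The open simplex of normalized positive strength vectors. -/
def simplexPos (S : Type*) [Fintype S] : Set (S → ℝ) :=
  {φ | (∀ x, 0 < φ x) ∧ ∑ x, φ x = 1}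

/-- Zermelo's system of equations
`Σ_{y≠x} t_{xy} φ_x/(φ_x+φ_y) = Σ_{y≠x} v_{xy}` for all `x`. -/
def ZermeloEq {S : Type*} [Fintype S] [DecidableEq S]
    (v : S → S → ℝ) (φ : S → ℝ) : Prop :=
  ∀ x, ∑ y ∈ Finset.univ.erase x, (v x y + v y x) * (φ x / (φ x + φ y)) =
    ∑ y ∈ Finset.univ.erase x, v x y


/-!
Existence: every factor of `Zf` lies in `[0, 1]`, so `Zf ψ` is at most the factor
`(ψ a / (ψ a + ψ b)) ^ v a b` of any single link. If some coordinate of `ψ` is tiny, the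
values of `ψ` spread over many orders of magnitude, and irreducibility yields a positive link
bridging a large gap; hence `Zf → 0` at the boundary of the simplex and `Zf` attains its
maximum on a compact set of the form `{ψ ≥ ε}`.

Stationarity: `Zf` is invariant under scaling, so at a maximizer the derivative of `log Zf`
along `φ x ↦ exp t * φ x` vanishes; this derivative is the total excess
`∑ y, (v x y * φ y - v y x * φ x) / (φ x + φ y)` of observed over expected score of `x`, and
its vanishing is Zermelo's equation at `x`.

Uniqueness: the excesses are antisymmetric, so for a solution the total excess of any set
`A` over its complement vanishes. Comparing two solutions on the set where their ratio is
maximal shows that the ratio is constant.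
-/

open Finset

section Irreducible

variable {S : Type*} {v : S → S → ℝ}

lemma exists_chainMin_pos_of_iScore_pos {x y : S} (h : 0 < iScore v x y) :
    ∃ l, 0 < chainMin v x l y := by
  obtain ⟨_, ⟨l, rfl⟩, hl⟩ := exists_lt_of_lt_csSup (s := {r | ∃ l, r = chainMin v x l y})
    ⟨v x y, [], rfl⟩ h
  exact ⟨l, hl⟩

lemma exists_pos_of_chainMin_pos {A : Set S} :
    ∀ {l : List S} {x y : S}, 0 < chainMin v x l y → x ∈ A → y ∉ A →
      ∃ a ∈ A, ∃ b ∉ A, 0 < v a b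
  | [], x, y, h, hx, hy => ⟨x, hx, y, hy, h⟩
  | z :: l, x, y, h, hx, hy => by
    rw [chainMin, lt_min_iff] at h
    by_cases hz : z ∈ A
    · exact exists_pos_of_chainMin_pos h.2 hz hy
    · exact ⟨x, hx, z, hz, h.1⟩

lemma exists_pos_of_iScore_pos (hirr : ∀ x y : S, x ≠ y → 0 < iScore v x y)
    {A : Set S} {x y : S} (hx : x ∈ A) (hy : y ∉ A) : ∃ a ∈ A, ∃ b ∉ A, 0 < v a b := by
  obtain ⟨l, hl⟩ := exists_chainMin_pos_of_iScore_pos (hirr x y (ne_of_mem_of_not_mem hx hy))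
  exact exists_pos_of_chainMin_pos hl hx hy

end Irreducible

lemma Finset.exists_eq_succ_of_monotone {α : Type*} [Fintype α] {T : ℕ → Finset α}
    (hT : Monotone T) (h0 : (T 0).Nonempty) (hT' : T (Fintype.card α - 1) ≠ univ) :
    ∃ j < Fintype.card α - 1, T j = T (j + 1) := by
  by_contra! hne
  have hcard : ∀ j ≤ Fintype.card α - 1, j < #(T j) := by
    intro j hj
    induction j with
    | zero => exact card_pos.2 h0
    | succ j ih =>
      have hlt := card_lt_card ((hT (j.le_add_right 1)).ssubset_of_ne (hne j (by omega)))
      have := ih (by omega)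
      omega
  have := hcard _ le_rfl
  have := card_le_univ (T (Fintype.card α - 1))
  exact hT' (eq_univ_of_card _ (by omega))

/-- Among the sublevel sets `{ψ ≤ ψ x₀ * r ^ j}`, `j < |S| - 1`, one equals the next; a
positive link leaving it spans a ratio of more than `r`. -/
lemma exists_pos_mul_lt_of_iScore_pos {S : Type*} [Fintype S] {v : S → S → ℝ}
    (hirr : ∀ x y : S, x ≠ y → 0 < iScore v x y) {ψ : S → ℝ} {r : ℝ} (hr : 1 ≤ r)
    {x₀ z : S} (hx₀ : 0 ≤ ψ x₀) (hz : ψ x₀ * r ^ (Fintype.card S - 1) < ψ z) :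
    ∃ a b, a ≠ b ∧ 0 < v a b ∧ ψ a * r < ψ b := by
  classical
  set T : ℕ → Finset S := fun j => {w | ψ w ≤ ψ x₀ * r ^ j}
  have hT : Monotone T := fun i j hij w hw => by
    simp only [T, mem_filter, mem_univ, true_and] at hw ⊢
    exact hw.trans (mul_le_mul_of_nonneg_left (pow_le_pow_right₀ hr hij) hx₀)
  have hzT : ∀ j < Fintype.card S, z ∉ T j := fun j hj hzj => by
    have := hT (Nat.le_sub_one_of_lt hj) hzj
    simp only [T, mem_filter, mem_univ, true_and] at this
    linarith
  have hx₀T : x₀ ∈ T 0 := by simp [T]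
  obtain ⟨j, hj, hTj⟩ := Finset.exists_eq_succ_of_monotone hT ⟨x₀, hx₀T⟩
    (fun h => hzT _ (Nat.sub_lt (Fintype.card_pos_iff.2 ⟨x₀⟩) one_pos) (h ▸ mem_univ z))
  obtain ⟨a, ha, b, hb, hab⟩ := exists_pos_of_iScore_pos hirr (A := ↑(T j))
    (mem_coe.2 (hT (Nat.zero_le j) hx₀T)) (mem_coe.not.2 (hzT j (by omega)))
  rw [mem_coe] at ha hb
  refine ⟨a, b, ne_of_mem_of_not_mem ha hb, hab, ?_⟩
  rw [hTj] at hb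
  simp only [T, mem_filter, mem_univ, true_and, not_le] at ha hb
  calc ψ a * r ≤ ψ x₀ * r ^ j * r := mul_le_mul_of_nonneg_right ha (by linarith)
      _ = ψ x₀ * r ^ (j + 1) := by ring
      _ < ψ b := hb

lemma Finset.prod_le_of_mem_of_le_one {ι R : Type*} [CommSemiring R] [PartialOrder R]
    [IsOrderedRing R] {s : Finset ι} {f : ι → R} (h0 : ∀ i ∈ s, 0 ≤ f i)
    (h1 : ∀ i ∈ s, f i ≤ 1) {i : ι} (hi : i ∈ s) : ∏ j ∈ s, f j ≤ f i := by
  classical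
  rw [← mul_prod_erase s f hi]
  exact mul_le_of_le_one_right (h0 i hi)
    (prod_le_one (fun j hj => h0 j (mem_of_mem_erase hj)) fun j hj => h1 j (mem_of_mem_erase hj))

section Likelihood

variable {S : Type*} [Fintype S] [DecidableEq S] {v : S → S → ℝ} {φ : S → ℝ}

lemma Zf_pos (hφ : ∀ x, 0 < φ x) : 0 < Zf v φ :=
  prod_pos fun x _ => prod_pos fun y _ =>
    div_pos (Real.rpow_pos_of_pos (hφ x) _) (Real.rpow_pos_of_pos (add_pos (hφ x) (hφ y)) _)

lemma Zf_const_mul (hφ : ∀ x, 0 ≤ φ x) {c : ℝ} (hc : 0 < c) :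
    Zf v (fun z => c * φ z) = Zf v φ := by
  refine prod_congr rfl fun x _ => prod_congr rfl fun y _ => ?_
  rw [← mul_add, Real.mul_rpow hc.le (hφ x), Real.mul_rpow hc.le (add_nonneg (hφ x) (hφ y)),
    mul_div_mul_left _ _ (Real.rpow_pos_of_pos hc _).ne']

lemma Zf_le_rpow (hv : IsLlull v) (hφ : ∀ x, 0 < φ x) {a b : S} (hab : a ≠ b) :
    Zf v φ ≤ (φ a / (φ a + φ b)) ^ v a b := by
  have hfactor : ∀ x y, x ≠ y → φ x ^ v x y / (φ x + φ y) ^ v x y ∈ Set.Icc (0 : ℝ) 1 := by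
    intro x y hxy
    have hsum := add_pos (hφ x) (hφ y)
    have hratio := div_nonneg (hφ x).le hsum.le
    rw [← Real.div_rpow (hφ x).le hsum.le]
    exact ⟨Real.rpow_nonneg hratio _, Real.rpow_le_one hratio
      ((div_le_one hsum).2 (by linarith [hφ y])) (hv x y hxy).1⟩
  rw [Zf, prod_sigma', Real.div_rpow (hφ a).le (add_pos (hφ a) (hφ b)).le]
  have hne : ∀ p ∈ univ.sigma fun x : S => univ.erase x, p.1 ≠ p.2 := fun p hp =>
    (ne_of_mem_erase (mem_sigma.1 hp).2).symm
  exact prod_le_of_mem_of_le_one (fun p hp => (hfactor _ _ (hne p hp)).1)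
    (fun p hp => (hfactor _ _ (hne p hp)).2) (i := ⟨a, b⟩)
    (mem_sigma.2 ⟨mem_univ a, mem_erase.2 ⟨hab.symm, mem_univ b⟩⟩)

lemma Zf_continuousOn : ContinuousOn (Zf v) {ψ : S → ℝ | ∀ x, 0 < ψ x} := by
  refine continuousOn_finsetProd _ fun x _ => continuousOn_finsetProd _ fun y _ => ?_
  refine ContinuousOn.div ?_ ?_ fun ψ hψ => (Real.rpow_pos_of_pos (add_pos (hψ x) (hψ y)) _).ne'
  · exact (continuous_apply x).continuousOn.rpow_const fun ψ hψ => Or.inl (hψ x).ne'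
  · exact ((continuous_apply x).add (continuous_apply y)).continuousOn.rpow_const
      fun ψ hψ => Or.inl (add_pos (hψ x) (hψ y)).ne'

end Likelihood

section Existence

variable {S : Type*} [Fintype S] [DecidableEq S] {v : S → S → ℝ}

lemma exists_Zf_lt_of_apply_lt [Nonempty S] (hv : IsLlull v)
    (hirr : ∀ x y : S, x ≠ y → 0 < iScore v x y) {δ : ℝ} (hδ : 0 < δ) :
    ∃ ε > 0, ∀ ψ ∈ simplexPos S, ∀ x, ψ x < ε → Zf v ψ < δ := by
  obtain ⟨r, hr, hrδ⟩ : ∃ r : ℝ, 1 < r ∧ ∀ a b, 0 < v a b → r ^ (-v a b) < δ := by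
    refine ((Filter.eventually_gt_atTop 1).and (Filter.eventually_all.2 fun a =>
      Filter.eventually_all.2 fun b => ?_)).exists
    by_cases hab : 0 < v a b
    · exact ((tendsto_rpow_neg_atTop hab).eventually (gt_mem_nhds hδ)).mono fun r hr _ => hr
    · exact Filter.Eventually.of_forall fun r h => absurd h hab
  set n := Fintype.card S
  have hn : (0 : ℝ) < n := Nat.cast_pos.2 Fintype.card_pos
  refine ⟨(n * r ^ (n - 1))⁻¹, by positivity, fun ψ ⟨hψ, hψ1⟩ x₀ hx₀ => ?_⟩
  obtain ⟨z, -, hz⟩ : ∃ z ∈ univ, (n : ℝ)⁻¹ ≤ ψ z := by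
    refine exists_le_of_sum_le univ_nonempty ?_
    rw [hψ1, sum_const, card_univ, nsmul_eq_mul, mul_inv_cancel₀ hn.ne']
  have hspread : ψ x₀ * r ^ (n - 1) < ψ z := by
    refine lt_of_lt_of_le ?_ hz
    calc ψ x₀ * r ^ (n - 1) < (n * r ^ (n - 1))⁻¹ * r ^ (n - 1) := by gcongr
      _ = (n : ℝ)⁻¹ := by field_simp
  obtain ⟨a, b, hab, hvab, hψab⟩ := exists_pos_mul_lt_of_iScore_pos hirr hr.le (hψ x₀).le hspread
  have hratio : ψ a / (ψ a + ψ b) ≤ r⁻¹ := by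
    rw [div_le_iff₀ (add_pos (hψ a) (hψ b))]
    field_simp
    nlinarith [hψ a]
  calc Zf v ψ ≤ (ψ a / (ψ a + ψ b)) ^ v a b := Zf_le_rpow hv hψ hab
    _ ≤ r⁻¹ ^ v a b := Real.rpow_le_rpow (by positivity [hψ a, hψ b]) hratio (hv a b hab).1
    _ = r ^ (-v a b) := by rw [Real.inv_rpow (by positivity), Real.rpow_neg (by positivity)]
    _ < δ := hrδ a b hvab

lemma exists_Zf_max [Nonempty S] (hv : IsLlull v)
    (hirr : ∀ x y : S, x ≠ y → 0 < iScore v x y) :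
    ∃ φ ∈ simplexPos S, ∀ ψ ∈ simplexPos S, Zf v ψ ≤ Zf v φ := by
  set u : S → ℝ := fun _ => (Fintype.card S : ℝ)⁻¹
  have hu : u ∈ simplexPos S := by
    refine ⟨fun _ => by positivity, ?_⟩
    rw [sum_const, card_univ, nsmul_eq_mul, mul_inv_cancel₀ (by positivity)]
  obtain ⟨ε, hε0, hε⟩ := exists_Zf_lt_of_apply_lt hv hirr (Zf_pos hu.1)
  set K := stdSimplex ℝ S ∩ {ψ | ∀ x, ε ≤ ψ x}
  have hK : IsCompact K := by
    refine (isCompact_stdSimplex ℝ S).inter_right ?_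
    simp only [Set.ofPred_forall]
    exact isClosed_iInter fun x => isClosed_le continuous_const (continuous_apply x)
  have hKpos : ∀ ψ ∈ K, ∀ x, 0 < ψ x := fun ψ hψ x => hε0.trans_le (hψ.2 x)
  have huK : u ∈ K := ⟨⟨fun x => (hu.1 x).le, hu.2⟩, fun x => not_lt.1 fun h => (hε u hu x h).false⟩
  obtain ⟨φ, hφK, hφ⟩ := hK.exists_isMaxOn ⟨u, huK⟩ (Zf_continuousOn.mono hKpos)
  refine ⟨φ, ⟨hKpos φ hφK, hφK.1.2⟩, fun ψ hψ => ?_⟩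
  by_cases hψK : ∀ x, ε ≤ ψ x
  · exact hφ ⟨⟨fun x => (hψ.1 x).le, hψ.2⟩, hψK⟩
  · obtain ⟨x, hx⟩ := not_forall.1 hψK
    exact ((hε ψ hψ x (not_le.1 hx)).trans_le (hφ huK)).le

end Existence

/-- Observed minus expected score of `x` against `y` under strengths `ψ`; when
`ψ x + ψ y ≠ 0` it equals `v x y - t_{xy} ψ x / (ψ x + ψ y)`. -/
noncomputable def scoreExcess {S : Type*} (v : S → S → ℝ) (ψ : S → ℝ) (x y : S) : ℝ :=
  (v x y * ψ y - v y x * ψ x) / (ψ x + ψ y)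

section ScoreExcess

variable {S : Type*} {v : S → S → ℝ} {ψ ψ' : S → ℝ}

lemma scoreExcess_swap (x y : S) : scoreExcess v ψ y x = -scoreExcess v ψ x y := by
  rw [scoreExcess, scoreExcess, add_comm (ψ y), ← neg_div, neg_sub]

lemma scoreExcess_self (x : S) : scoreExcess v ψ x x = 0 := by
  simp [scoreExcess]

lemma scoreExcess_eq {x y : S} (h : ψ x + ψ y ≠ 0) :
    scoreExcess v ψ x y = v x y - (v x y + v y x) * (ψ x / (ψ x + ψ y)) := by
  rw [scoreExcess]
  field_simp
  ring

lemma sum_sum_scoreExcess_eq_zero (A : Finset S) :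
    ∑ x ∈ A, ∑ y ∈ A, scoreExcess v ψ x y = 0 := by
  have h : ∑ x ∈ A, ∑ y ∈ A, scoreExcess v ψ x y = ∑ x ∈ A, ∑ y ∈ A, -scoreExcess v ψ x y := by
    rw [sum_comm]
    exact sum_congr rfl fun y _ => sum_congr rfl fun x _ => scoreExcess_swap y x
  simp only [sum_neg_distrib] at h
  linarith

lemma scoreExcess_le_of_le (hψ : ∀ z, 0 < ψ z) (hψ' : ∀ z, 0 < ψ' z) {c : ℝ} {x y : S}
    (hx : ψ' x = c * ψ x) (hy : ψ' y ≤ c * ψ y) (ht : 0 ≤ v x y + v y x) :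
    scoreExcess v ψ' x y ≤ scoreExcess v ψ x y := by
  rw [scoreExcess, scoreExcess, div_le_div_iff₀ (add_pos (hψ' x) (hψ' y))
    (add_pos (hψ x) (hψ y)), hx]
  nlinarith [mul_nonneg (mul_nonneg ht (hψ x).le) (sub_nonneg.2 hy)]

lemma scoreExcess_lt_of_lt (hψ : ∀ z, 0 < ψ z) (hψ' : ∀ z, 0 < ψ' z) {c : ℝ} {x y : S}
    (hx : ψ' x = c * ψ x) (hy : ψ' y < c * ψ y) (ht : 0 < v x y + v y x) :
    scoreExcess v ψ' x y < scoreExcess v ψ x y := by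
  rw [scoreExcess, scoreExcess, div_lt_div_iff₀ (add_pos (hψ' x) (hψ' y))
    (add_pos (hψ x) (hψ y)), hx]
  nlinarith [mul_pos (mul_pos ht (hψ x)) (sub_pos.2 hy)]

variable [Fintype S] [DecidableEq S]

lemma zermeloEq_iff (hψ : ∀ z, 0 < ψ z) :
    ZermeloEq v ψ ↔ ∀ x, ∑ y, scoreExcess v ψ x y = 0 := by
  refine forall_congr' fun x => ?_
  rw [← sum_erase _ (scoreExcess_self x), ← sub_eq_zero, ← sum_sub_distrib, ← neg_eq_zero,
    ← sum_neg_distrib]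
  refine Eq.congr_left (sum_congr rfl fun y _ => ?_)
  rw [scoreExcess_eq (add_pos (hψ x) (hψ y)).ne']
  ring

end ScoreExcess

section Stationarity

variable {S : Type*} [Fintype S] [DecidableEq S] {v : S → S → ℝ} {φ : S → ℝ}

lemma log_Zf (hφ : ∀ x, 0 < φ x) :
    Real.log (Zf v φ) =
      ∑ x, ∑ y ∈ univ.erase x, v x y * (Real.log (φ x) - Real.log (φ x + φ y)) := by
  rw [Zf, Real.log_prod fun x _ => (prod_pos fun y _ => div_pos (Real.rpow_pos_of_pos (hφ x) _)
    (Real.rpow_pos_of_pos (add_pos (hφ x) (hφ y)) _)).ne']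
  refine sum_congr rfl fun x _ => ?_
  rw [Real.log_prod fun y _ => (div_pos (Real.rpow_pos_of_pos (hφ x) _)
    (Real.rpow_pos_of_pos (add_pos (hφ x) (hφ y)) _)).ne']
  refine sum_congr rfl fun y _ => ?_
  rw [Real.log_div (Real.rpow_pos_of_pos (hφ x) _).ne'
    (Real.rpow_pos_of_pos (add_pos (hφ x) (hφ y)) _).ne', Real.log_rpow (hφ x),
    Real.log_rpow (add_pos (hφ x) (hφ y)), mul_sub]

lemma hasDerivAt_log_Zf_exp_mul (hφ : ∀ x, 0 < φ x) (d : S → ℝ) :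
    HasDerivAt (fun t => Real.log (Zf v fun z => Real.exp (t * d z) * φ z))
      (∑ x, ∑ y ∈ univ.erase x, v x y * φ y * (d x - d y) / (φ x + φ y)) 0 := by
  have hpos : ∀ t z, 0 < Real.exp (t * d z) * φ z := fun t z => mul_pos (Real.exp_pos _) (hφ z)
  rw [show (fun t => Real.log (Zf v fun z => Real.exp (t * d z) * φ z)) = _ from
    funext fun t => log_Zf (hpos t)]
  have hcoord : ∀ z, HasDerivAt (fun t => Real.exp (t * d z) * φ z) (d z * φ z) 0 := fun z => by
    simpa using (((hasDerivAt_id (0 : ℝ)).mul_const (d z)).exp).mul_const (φ z)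
  refine HasDerivAt.fun_sum fun x _ => HasDerivAt.fun_sum fun y _ => ?_
  have hx := (hcoord x).log (by simpa using (hφ x).ne')
  have hxy := ((hcoord x).fun_add (hcoord y)).log (by simpa using (add_pos (hφ x) (hφ y)).ne')
  refine ((hx.fun_sub hxy).const_mul (v x y)).congr_deriv ?_
  have := (hφ x).ne'
  have := (add_pos (hφ x) (hφ y)).ne'
  simp only [zero_mul, Real.exp_zero, one_mul]
  field_simp
  ring

lemma sum_sum_erase_mul_sub_div (d : S → ℝ) :
    ∑ x, ∑ y ∈ univ.erase x, v x y * φ y * (d x - d y) / (φ x + φ y) =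
      ∑ x, d x * ∑ y, scoreExcess v φ x y := by
  calc _ = ∑ x, ∑ y, (d x * (v x y * φ y / (φ x + φ y)) - d y * (v x y * φ y / (φ x + φ y))) :=
        sum_congr rfl fun x _ => by
          rw [sum_erase _ (by rw [sub_self, mul_zero, zero_div])]
          exact sum_congr rfl fun y _ => by ring
    _ = ∑ x, ∑ y, d x * (v x y * φ y / (φ x + φ y)) -
          ∑ x, ∑ y, d x * (v y x * φ x / (φ y + φ x)) := by
        simp only [sum_sub_distrib]
        rw [sum_comm (f := fun x y => d y * (v x y * φ y / (φ x + φ y)))]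
    _ = _ := by
        rw [← sum_sub_distrib]
        refine sum_congr rfl fun x _ => ?_
        rw [← sum_sub_distrib, mul_sum]
        refine sum_congr rfl fun y _ => ?_
        rw [scoreExcess, sub_div, add_comm (φ y), mul_sub]

lemma sum_scoreExcess_eq_zero_of_Zf_max (hφ : φ ∈ simplexPos S)
    (hmax : ∀ ψ ∈ simplexPos S, Zf v ψ ≤ Zf v φ) (x : S) :
    ∑ y, scoreExcess v φ x y = 0 := by
  -- a multiplicative perturbation of `φ x` stays positive for every `t`
  set d : S → ℝ := Pi.single x 1
  set g := fun t => Real.log (Zf v fun z => Real.exp (t * d z) * φ z)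
  have hg : IsLocalMax g 0 := Filter.Eventually.of_forall fun t => by
    set ψ := fun z => Real.exp (t * d z) * φ z
    have hψ : ∀ z, 0 < ψ z := fun z => mul_pos (Real.exp_pos _) (hφ.1 z)
    have hsum : 0 < ∑ z, ψ z := sum_pos (fun z _ => hψ z) ⟨x, mem_univ x⟩
    have hnorm : (fun z => (∑ z, ψ z)⁻¹ * ψ z) ∈ simplexPos S :=
      ⟨fun z => mul_pos (inv_pos.2 hsum) (hψ z), by rw [← mul_sum, inv_mul_cancel₀ hsum.ne']⟩
    have h0 : g 0 = Real.log (Zf v φ) := by simp [g]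
    rw [h0]
    refine Real.log_le_log (Zf_pos hψ) ?_
    rw [← Zf_const_mul (fun z => (hψ z).le) (inv_pos.2 hsum)]
    exact hmax _ hnorm
  have := hg.hasDerivAt_eq_zero (hasDerivAt_log_Zf_exp_mul hφ.1 d)
  rw [sum_sum_erase_mul_sub_div] at this
  simpa [d, Pi.single_apply] using this

lemma zermeloEq_of_Zf_max (hφ : φ ∈ simplexPos S)
    (hmax : ∀ ψ ∈ simplexPos S, Zf v ψ ≤ Zf v φ) : ZermeloEq v φ :=
  (zermeloEq_iff hφ.1).2 (sum_scoreExcess_eq_zero_of_Zf_max hφ hmax)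

end Stationarity

section Uniqueness

variable {S : Type*} [Fintype S] [DecidableEq S] {v : S → S → ℝ} {φ φ' : S → ℝ}

lemma sum_sum_compl_scoreExcess_eq_zero (hφ : ∀ x, ∑ y, scoreExcess v φ x y = 0)
    (A : Finset S) : ∑ x ∈ A, ∑ y ∈ Aᶜ, scoreExcess v φ x y = 0 := by
  have hcompl : ∀ x, ∑ y ∈ Aᶜ, scoreExcess v φ x y = -∑ y ∈ A, scoreExcess v φ x y :=
    fun x => by rw [eq_neg_iff_add_eq_zero, add_comm, sum_add_sum_compl, hφ x]
  rw [sum_congr rfl fun x _ => hcompl x, sum_neg_distrib, sum_sum_scoreExcess_eq_zero,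
    neg_zero]

/-- Let `A` be the set where `φ' / φ` attains its maximum `c`. From `φ` to `φ'` no term of
the excess of `A` over its complement increases, and the term of a positive link out of `A`
strictly decreases; since both totals vanish, `A` is everything. -/
lemma exists_eq_const_mul_of_zermeloEq [Nonempty S] (hv : IsLlull v)
    (hirr : ∀ x y : S, x ≠ y → 0 < iScore v x y) (hφ : ∀ z, 0 < φ z) (hφ' : ∀ z, 0 < φ' z)
    (h : ZermeloEq v φ) (h' : ZermeloEq v φ') : ∃ c, ∀ z, φ' z = c * φ z := by
  rw [zermeloEq_iff hφ] at h
  rw [zermeloEq_iff hφ'] at h'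
  obtain ⟨z₀, -, hz₀⟩ := exists_max_image univ (fun z => φ' z / φ z) univ_nonempty
  set c := φ' z₀ / φ z₀
  have hle : ∀ z, φ' z ≤ c * φ z := fun z => (div_le_iff₀ (hφ z)).1 (hz₀ z (mem_univ z))
  set A : Finset S := {z | φ' z = c * φ z}
  refine ⟨c, fun y => by_contra fun hy => ?_⟩
  obtain ⟨a, ha, b, hb, hab⟩ := exists_pos_of_iScore_pos hirr (A := ↑A) (x := z₀) (y := y)
    (by simp [A, c, div_mul_cancel₀ _ (hφ z₀).ne']) (by simpa [A] using hy)
  have hA : ∀ x ∈ A, φ' x = c * φ x := fun x hx => (mem_filter.1 hx).2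
  have hAc : ∀ y ∈ Aᶜ, φ' y < c * φ y := fun y hy =>
    (hle y).lt_of_ne fun hy' => (mem_compl.1 hy) (mem_filter.2 ⟨mem_univ y, hy'⟩)
  have hlt : ∑ x ∈ A, ∑ y ∈ Aᶜ, scoreExcess v φ' x y < ∑ x ∈ A, ∑ y ∈ Aᶜ, scoreExcess v φ x y := by
    have hne : ∀ x ∈ A, ∀ y ∈ Aᶜ, x ≠ y := fun x hx y hy => ne_of_mem_of_not_mem hx (mem_compl.1 hy)
    refine sum_lt_sum (fun x hx => sum_le_sum fun y hy => ?_) ⟨a, ha, sum_lt_sum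
      (fun y hy => ?_) ⟨b, mem_compl.2 hb, ?_⟩⟩
    · exact scoreExcess_le_of_le hφ hφ' (hA x hx) (hAc y hy).le
        (add_nonneg (hv x y (hne x hx y hy)).1 (hv y x (hne x hx y hy).symm).1)
    · exact scoreExcess_le_of_le hφ hφ' (hA a ha) (hAc y hy).le
        (add_nonneg (hv a y (hne a ha y hy)).1 (hv y a (hne a ha y hy).symm).1)
    · exact scoreExcess_lt_of_lt hφ hφ' (hA a ha) (hAc b (mem_compl.2 hb))
        (add_pos_of_pos_of_nonneg hab (hv b a (hne a ha b (mem_compl.2 hb)).symm).1)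
  rw [sum_sum_compl_scoreExcess_eq_zero h, sum_sum_compl_scoreExcess_eq_zero h'] at hlt
  exact hlt.false

lemma eq_of_zermeloEq [Nonempty S] (hv : IsLlull v)
    (hirr : ∀ x y : S, x ≠ y → 0 < iScore v x y) (hφ : φ ∈ simplexPos S)
    (hφ' : φ' ∈ simplexPos S) (h : ZermeloEq v φ) (h' : ZermeloEq v φ') : φ' = φ := by
  obtain ⟨c, hc⟩ := exists_eq_const_mul_of_zermeloEq hv hirr hφ.1 hφ'.1 h h'
  have hc1 : c = 1 := by
    simpa [hc, ← mul_sum, hφ.2] using hφ'.2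
  funext z
  rw [hc z, hc1, one_mul]

end Uniqueness

/-- Zermelo's theorem: for irreducible `v` there is a unique maximizer of `F`
on the open simplex, and it is the unique solution there of Zermelo's system. -/
theorem stmt9 {S : Type*} [Fintype S] [DecidableEq S] (hS : 2 ≤ Fintype.card S)
    (v : S → S → ℝ) (hv : IsLlull v)
    (hirr : ∀ x y : S, x ≠ y → 0 < iScore v x y) :
    ∃ φ ∈ simplexPos S, (∀ ψ ∈ simplexPos S, Zf v ψ ≤ Zf v φ) ∧ ZermeloEq v φ ∧
      ∀ φ' ∈ simplexPos S,
        ((∀ ψ ∈ simplexPos S, Zf v ψ ≤ Zf v φ') ∨ ZermeloEq v φ') → φ' = φ := by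
  have : Nonempty S := Fintype.card_pos_iff.1 (by omega)
  obtain ⟨φ, hφ, hmax⟩ := exists_Zf_max hv hirr
  have hzer := zermeloEq_of_Zf_max hφ hmax
  refine ⟨φ, hφ, hmax, hzer, fun φ' hφ' hφ'max => ?_⟩
  exact eq_of_zermeloEq hv hirr hφ hφ' hzer (hφ'max.elim (zermeloEq_of_Zf_max hφ') id)
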